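/- arXiv:1606.08039 — 6 statements merged into one kernel-verified Lean document; each statement's English description precedes it below -/
import Mathlib

section
/- Let G be a finite abelian group, G₀ ⊆ G a subset, and g ∈ G₀. Then the following six quantities are all equal: gcd{ v_g(B) : B ∈ B(G₀) }, gcd{ v_g(A) : A ∈ A(G₀) }, min{ v_g(A) : A ∈ A(G₀), v_g(A) > 0 }, min{ v_g(B) : B ∈ B(G₀), v_g(B) > 0 }, min{ k ∈ ℕ, k ≥ 1 : k·g ∈ ⟨G₀ \ {g}⟩ }, and gcd{ k ∈ ℕ, k ≥ 1 : k·g ∈ ⟨G₀ \ {g}⟩ }. In particular, this common value divides ord(g). -/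
/- Common definitions for zero-sum theory over a finite abelian group. -/

variable {G : Type*} [AddCommGroup G]

/-- `S` is a zero-sum sequence over the subset `G₀`:
a finite multiset of elements of `G₀` whose sum is `0`. -/
def IsZeroSumSeq (G₀ : Set G) (S : Multiset G) : Prop :=
  (∀ g ∈ S, g ∈ G₀) ∧ S.sum = 0

/-- `A` is an atom (minimal zero-sum sequence) over `G₀`: a nonempty zero-sum
sequence over `G₀` that cannot be written as the union of two nonempty
zero-sum sequences, i.e. has no proper nonempty zero-sum subsequence. -/
def IsAtomOver (G₀ : Set G) (A : Multiset G) : Prop :=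
  IsZeroSumSeq G₀ A ∧ A ≠ 0 ∧
    ∀ B : Multiset G, B ≤ A → B ≠ 0 → B ≠ A → B.sum ≠ 0

/-- The set of lengths `L(B)` of a zero-sum sequence `B` over `G₀`: all `k`
such that `B` is a union of `k` atoms over `G₀`. -/
def lengthSet (G₀ : Set G) (B : Multiset G) : Set ℕ :=
  { k | ∃ f : Multiset (Multiset G), f.card = k ∧ (∀ A ∈ f, IsAtomOver G₀ A) ∧ f.sum = B }

/-- The set of successive distances `Δ(L)` of a set `L ⊆ ℕ`. -/
def distSet (L : Set ℕ) : Set ℕ :=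
  { d | ∃ a ∈ L, ∃ b ∈ L, a < b ∧ b - a = d ∧ ∀ c ∈ L, a < c → c < b → False }

/-- The set of distances `Δ(G₀)`: union of `Δ(L(B))` over all nonempty
zero-sum sequences `B` over `G₀`. -/
def DeltaOf (G₀ : Set G) : Set ℕ :=
  ⋃ B : Multiset G, ⋃ (_ : B ≠ 0), distSet (lengthSet G₀ B)

/-- The set of minimal distances `Δ*(G) = { min Δ(G₀) : G₀ ⊆ G, Δ(G₀) ≠ ∅ }`. -/
def DeltaStar (G : Type*) [AddCommGroup G] : Set ℕ :=
  { d | ∃ G₀ : Set G, (DeltaOf G₀).Nonempty ∧ sInf (DeltaOf G₀) = d }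

/-- The cross number `k(S) = Σ_{g ∈ S} 1/ord(g)` (with multiplicity). -/
noncomputable def crossNumber (S : Multiset G) : ℚ :=
  (S.map fun g => ((addOrderOf g : ℚ))⁻¹).sum

/-- `G₀` is an LCN-set: every atom over `G₀` has cross number at least `1`. -/
def IsLCNSet (G₀ : Set G) : Prop :=
  ∀ A : Multiset G, IsAtomOver G₀ A → 1 ≤ crossNumber A

/-- `r` is the rank of the finite abelian group `G`: the number of summands
in the invariant factor decomposition `G ≅ C_{n₁} ⊕ ... ⊕ C_{n_r}` with
`1 < n₁ ∣ n₂ ∣ ... ∣ n_r`. -/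
def IsRank (G : Type*) [AddCommGroup G] (r : ℕ) : Prop :=
  ∃ d : Fin r → ℕ, (∀ i, 1 < d i) ∧ (∀ i j, i ≤ j → d i ∣ d j) ∧
    Nonempty (G ≃+ ((i : Fin r) → ZMod (d i)))

/-- The system of sets of lengths `𝓛(G) = { L(B) : B ∈ 𝓑(G) nonempty }`. -/
def LSystem (G : Type*) [AddCommGroup G] : Set (Set ℕ) :=
  { L | ∃ B : Multiset G, B ≠ 0 ∧ IsZeroSumSeq (Set.univ : Set G) B ∧
      lengthSet (Set.univ : Set G) B = L }

/-- `d` is the greatest common divisor of the set `S ⊆ ℕ`. -/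
def IsSetGcd (S : Set ℕ) (d : ℕ) : Prop :=
  (∀ s ∈ S, d ∣ s) ∧ ∀ e : ℕ, (∀ s ∈ S, e ∣ s) → e ∣ d

/-! With `H = ⟨G₀ \ {g}⟩`, every quantity equals the order `d` of `g` in `G ⧸ H`. For a zero-sum
sequence `B`, `v_g(B) • g` is minus the sum of the other terms, so it lies in `H` and `d ∣ v_g(B)`.
Conversely, in a finite group `-(d • g)` is a sum of elements of `G₀ \ {g}`, which yields a
zero-sum sequence with `v_g = d`; one of its atoms contains `g`, so has `0 < v_g ≤ d`, hence
`v_g = d`. -/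

theorem nsmul_mem_iff_addOrderOf_mk_dvd (H : AddSubgroup G) (g : G) (m : ℕ) :
    m • g ∈ H ↔ addOrderOf (g : G ⧸ H) ∣ m := by
  rw [addOrderOf_dvd_iff_nsmul_eq_zero, ← QuotientAddGroup.mk_nsmul,
    QuotientAddGroup.eq_zero_iff]

section ZeroSumMultiplicity

variable [DecidableEq G] {G₀ : Set G} {g : G}

theorem IsZeroSumSeq.count_nsmul_mem_closure {B : Multiset G} (hB : IsZeroSumSeq G₀ B) :
    B.count g • g ∈ AddSubgroup.closure (G₀ \ {g}) := by
  have hsplit : B.sum = B.count g • g + (B.filter (· ≠ g)).sum := by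
    rw [← Multiset.sum_replicate, ← Multiset.filter_eq', ← Multiset.sum_add,
      Multiset.filter_add_not]
  have hrest : (B.filter (· ≠ g)).sum ∈ AddSubgroup.closure (G₀ \ {g}) :=
    AddSubgroup.multiset_sum_mem _ _ fun x hx =>
      AddSubgroup.subset_closure ⟨hB.1 x (Multiset.mem_of_mem_filter hx),
        (Multiset.mem_filter.1 hx).2⟩
  rw [hB.2, eq_comm, add_eq_zero_iff_eq_neg] at hsplit
  rw [hsplit]
  exact neg_mem hrest

theorem exists_isZeroSumSeq_count_eq [Finite G] (hg : g ∈ G₀) {m : ℕ}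
    (hm : m • g ∈ AddSubgroup.closure (G₀ \ {g})) :
    ∃ B : Multiset G, IsZeroSumSeq G₀ B ∧ B.count g = m := by
  have hneg : -(m • g) ∈ AddSubmonoid.closure (G₀ \ {g}) := by
    rw [← AddSubgroup.closure_toAddSubmonoid_of_finite]
    exact (AddSubgroup.mem_toAddSubmonoid _ _).2 (neg_mem hm)
  obtain ⟨T, hT, hTsum⟩ := AddSubmonoid.exists_multiset_of_mem_closure hneg
  refine ⟨Multiset.replicate m g + T, ⟨?_, ?_⟩, ?_⟩
  · intro x hx
    rcases Multiset.mem_add.1 hx with hx | hx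
    · rwa [Multiset.eq_of_mem_replicate hx]
    · exact (hT x hx).1
  · rw [Multiset.sum_add, Multiset.sum_replicate, hTsum, add_neg_cancel]
  · rw [Multiset.count_add, Multiset.count_replicate_self,
      Multiset.count_eq_zero_of_notMem fun h => (hT g h).2 rfl, add_zero]

theorem IsZeroSumSeq.exists_isAtomOver_le_count_pos {B : Multiset G} (hB : IsZeroSumSeq G₀ B)
    (hpos : 0 < B.count g) :
    ∃ A : Multiset G, IsAtomOver G₀ A ∧ A ≤ B ∧ 0 < A.count g := by
  induction B using WellFoundedLT.induction with
  | ind B ih =>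
    by_cases hatom : IsAtomOver G₀ B
    · exact ⟨B, hatom, le_rfl, hpos⟩
    have hB0 : B ≠ 0 := by
      rintro rfl
      simp at hpos
    obtain ⟨C, hCB, hC0, hCne, hCsum⟩ : ∃ C ≤ B, C ≠ 0 ∧ C ≠ B ∧ C.sum = 0 := by
      simpa [IsAtomOver, hB, hB0] using hatom
    have hsplit : C + (B - C) = B := add_tsub_cancel_of_le hCB
    have hsub : ∀ D ≤ B, D.sum = 0 → IsZeroSumSeq G₀ D :=
      fun D hD hDsum => ⟨fun x hx => hB.1 x (Multiset.mem_of_le hD hx), hDsum⟩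
    have hrest : (B - C).sum = 0 := by
      simpa [hCsum, hB.2] using congrArg Multiset.sum hsplit
    -- one of the two zero-sum parts of `B` still contains `g`
    rcases Nat.eq_zero_or_pos (C.count g) with hCg | hCg
    · have hBCg : 0 < (B - C).count g := by
        rw [Multiset.count_sub]
        omega
      have hlt : B - C < B := by
        refine lt_of_le_of_ne (Multiset.sub_le_self B C) fun h => hC0 ?_
        simpa [h] using hsplit
      obtain ⟨A, hA, hAle, hAg⟩ := ih _ hlt (hsub _ (Multiset.sub_le_self B C) hrest) hBCg
      exact ⟨A, hA, hAle.trans (Multiset.sub_le_self B C), hAg⟩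
    · obtain ⟨A, hA, hAle, hAg⟩ := ih C (lt_of_le_of_ne hCB hCne) (hsub C hCB hCsum) hCg
      exact ⟨A, hA, hAle.trans hCB, hAg⟩

theorem IsZeroSumSeq.addOrderOf_mk_dvd_count {B : Multiset G} (hB : IsZeroSumSeq G₀ B) :
    addOrderOf (g : G ⧸ AddSubgroup.closure (G₀ \ {g})) ∣ B.count g :=
  (nsmul_mem_iff_addOrderOf_mk_dvd _ g _).1 hB.count_nsmul_mem_closure

theorem exists_isAtomOver_count_eq_addOrderOf_mk [Finite G] (hg : g ∈ G₀) :
    ∃ A : Multiset G, IsAtomOver G₀ A ∧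
      A.count g = addOrderOf (g : G ⧸ AddSubgroup.closure (G₀ \ {g})) := by
  set d := addOrderOf (g : G ⧸ AddSubgroup.closure (G₀ \ {g}))
  have hd : 0 < d := addOrderOf_pos _
  obtain ⟨B, hB, hBd⟩ :=
    exists_isZeroSumSeq_count_eq hg ((nsmul_mem_iff_addOrderOf_mk_dvd _ g d).2 dvd_rfl)
  obtain ⟨A, hA, hAB, hApos⟩ := hB.exists_isAtomOver_le_count_pos (hBd ▸ hd)
  exact ⟨A, hA, le_antisymm (hBd ▸ Multiset.count_le_of_le g hAB)
    (Nat.le_of_dvd hApos hA.1.addOrderOf_mk_dvd_count)⟩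

end ZeroSumMultiplicity

theorem IsSetGcd.of_mem_of_dvd {S : Set ℕ} {d : ℕ} (hd : d ∈ S) (hdvd : ∀ s ∈ S, d ∣ s) :
    IsSetGcd S d :=
  ⟨hdvd, fun _ he => he d hd⟩

theorem isLeast_pos_of_mem_of_dvd {S : Set ℕ} {d : ℕ} (hpos : 0 < d) (hd : d ∈ S)
    (hdvd : ∀ s ∈ S, d ∣ s) : IsLeast {s | 0 < s ∧ s ∈ S} d :=
  ⟨⟨hpos, hd⟩, fun _ ⟨hs, hsS⟩ => Nat.le_of_dvd hs (hdvd _ hsS)⟩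

theorem gcd_min_multiplicities
    (G : Type*) [AddCommGroup G] [Fintype G] [DecidableEq G]
    (G₀ : Set G) (g : G) (hg : g ∈ G₀) :
    ∃ d : ℕ,
      IsSetGcd { v | ∃ B : Multiset G, IsZeroSumSeq G₀ B ∧ Multiset.count g B = v } d ∧
      IsSetGcd { v | ∃ A : Multiset G, IsAtomOver G₀ A ∧ Multiset.count g A = v } d ∧
      IsLeast { v | 0 < v ∧
        ∃ A : Multiset G, IsAtomOver G₀ A ∧ Multiset.count g A = v } d ∧
      IsLeast { v | 0 < v ∧
        ∃ B : Multiset G, IsZeroSumSeq G₀ B ∧ Multiset.count g B = v } d ∧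
      IsLeast { m : ℕ | 0 < m ∧ m • g ∈ AddSubgroup.closure (G₀ \ {g}) } d ∧
      IsSetGcd { m : ℕ | 0 < m ∧ m • g ∈ AddSubgroup.closure (G₀ \ {g}) } d ∧
      d ∣ addOrderOf g := by
  set H := AddSubgroup.closure (G₀ \ {g})
  set d := addOrderOf (g : G ⧸ H)
  have hd : 0 < d := addOrderOf_pos _
  obtain ⟨A, hA, hAd⟩ := exists_isAtomOver_count_eq_addOrderOf_mk hg
  have hseq : d ∈ { v | ∃ B : Multiset G, IsZeroSumSeq G₀ B ∧ B.count g = v } := ⟨A, hA.1, hAd⟩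
  have hatom : d ∈ { v | ∃ A : Multiset G, IsAtomOver G₀ A ∧ A.count g = v } := ⟨A, hA, hAd⟩
  have hmult : d ∈ { m : ℕ | m • g ∈ H } := (nsmul_mem_iff_addOrderOf_mk_dvd H g d).2 dvd_rfl
  have dvd_seq : ∀ v ∈ { v | ∃ B : Multiset G, IsZeroSumSeq G₀ B ∧ B.count g = v }, d ∣ v := by
    rintro _ ⟨B, hB, rfl⟩
    exact hB.addOrderOf_mk_dvd_count
  have dvd_atom : ∀ v ∈ { v | ∃ A : Multiset G, IsAtomOver G₀ A ∧ A.count g = v }, d ∣ v :=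
    fun v ⟨A, hA, hv⟩ => dvd_seq v ⟨A, hA.1, hv⟩
  have dvd_mult : ∀ m ∈ { m : ℕ | m • g ∈ H }, d ∣ m := fun m =>
    (nsmul_mem_iff_addOrderOf_mk_dvd H g m).1
  exact ⟨d, .of_mem_of_dvd hseq dvd_seq, .of_mem_of_dvd hatom dvd_atom,
    isLeast_pos_of_mem_of_dvd hd hatom dvd_atom, isLeast_pos_of_mem_of_dvd hd hseq dvd_seq,
    isLeast_pos_of_mem_of_dvd hd hmult dvd_mult,
    .of_mem_of_dvd ⟨hd, hmult⟩ fun m hm => dvd_mult m hm.2,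
    addOrderOf_map_dvd (QuotientAddGroup.mk' H) g⟩
end

section
/- Let G be a finite abelian group and G₀ ⊆ G a subset such that for every two distinct elements h, h' ∈ G₀ one has h ∉ ⟨G₀ \ {h, h'}⟩. Then for every atom A ∈ A(G₀) with supp(A) ⊊ G₀ and every h ∈ supp(A), one has gcd(v_h(A), ord(h)) > 1. -/
/- Common definitions for zero-sum theory over a finite abelian group. -/

variable {G : Type*} [AddCommGroup G]

theorem gcd_count_order_gt_one
    (G : Type*) [AddCommGroup G] [Fintype G] [DecidableEq G]
    (G₀ : Set G)
    (hcond : ∀ h ∈ G₀, ∀ h' ∈ G₀, h ≠ h' →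
      h ∉ AddSubgroup.closure (G₀ \ {h, h'}))
    (A : Multiset G) (hA : IsAtomOver G₀ A)
    (hsupp : (↑A.toFinset : Set G) ⊂ G₀)
    (h : G) (hh : h ∈ A) :
    1 < Nat.gcd (Multiset.count h A) (addOrderOf h) := by
  obtain ⟨hsub, hne⟩ := hsupp
  obtain ⟨h', hh'G₀, hh'A⟩ : ∃ h', h' ∈ G₀ ∧ h' ∉ A.toFinset := by
    by_contra hc
    push_neg at hc
    exact hne fun g hg => hc g hg
  have hhG₀ : h ∈ G₀ := hA.1.1 h hh
  have hhh' : h ≠ h' := fun e => hh'A (e ▸ Multiset.mem_toFinset.mpr hh)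
  set n := Multiset.count h A with hn
  have hn1 : 1 ≤ n := Multiset.one_le_count_iff_mem.mpr hh
  -- decompose A
  have hdecomp : A = Multiset.replicate n h + A.filter (fun g => ¬ g = h) := by
    conv_lhs => rw [← Multiset.filter_add_not (fun g => g = h) A]
    rw [Multiset.filter_eq']
  set K := AddSubgroup.closure (G₀ \ {h, h'}) with hK
  have hrest : (A.filter (fun g => ¬ g = h)).sum ∈ K := by
    refine AddSubgroup.multiset_sum_mem _ _ (fun g hg => ?_)
    rw [Multiset.mem_filter] at hg
    refine AddSubgroup.subset_closure ⟨hA.1.1 g hg.1, ?_⟩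
    intro hmem
    rcases hmem with rfl | rfl
    · exact hg.2 rfl
    · exact hh'A (Multiset.mem_toFinset.mpr hg.1)
  have hsum0 : A.sum = 0 := hA.1.2
  have hnh : (n : ℤ) • h ∈ K := by
    have : n • h + (A.filter (fun g => ¬ g = h)).sum = 0 := by
      rw [← Multiset.sum_replicate, ← Multiset.sum_add, ← hdecomp, hsum0]
    have h1 : n • h = -(A.filter (fun g => ¬ g = h)).sum := by
      linear_combination (norm := abel) this
    rw [natCast_zsmul, h1]
    exact neg_mem hrest
  by_contra hlt
  push_neg at hlt
  have hgcd1 : Nat.gcd n (addOrderOf h) = 1 := by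
    have hpos : 0 < Nat.gcd n (addOrderOf h) :=
      Nat.gcd_pos_of_pos_left _ hn1
    omega
  have hKh : h ∈ K := by
    have hb : (n : ℤ) * Nat.gcdA n (addOrderOf h)
        + (addOrderOf h : ℤ) * Nat.gcdB n (addOrderOf h) = 1 := by
      have := Nat.gcd_eq_gcd_ab n (addOrderOf h)
      rw [hgcd1] at this
      push_cast at this ⊢
      linarith
    have : h = (Nat.gcdA n (addOrderOf h)) • ((n : ℤ) • h)
        + (Nat.gcdB n (addOrderOf h)) • ((addOrderOf h : ℤ) • h) := by
      rw [smul_smul, smul_smul, ← add_zsmul]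
      rw [show Nat.gcdA n (addOrderOf h) * ((n:ℤ)) + Nat.gcdB n (addOrderOf h) * (addOrderOf h : ℤ) = 1 by linarith]
      rw [one_zsmul]
    rw [this]
    have hord : (addOrderOf h : ℤ) • h = 0 := by
      rw [natCast_zsmul, addOrderOf_nsmul_eq_zero]
    rw [hord, smul_zero, add_zero]
    exact zsmul_mem hnh _
  exact hcond h hhG₀ h' hh'G₀ hhh' hKh
end

section
/- Let G be a finite abelian group and g ∈ G with ord(g) ≥ 3. Then ord(g) − 2 ∈ Δ*(G). In particular, if exp(G) ≥ 3 then exp(G) − 2 ∈ Δ*(G). -/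
/- Common definitions for zero-sum theory over a finite abelian group. -/

variable {G : Type*} [AddCommGroup G]

/-!
Fix `g` of order `n ≥ 3` and `G₀ = {g, -g}`. The atoms over `G₀` are `gⁿ`, `(-g)ⁿ` and `g(-g)`.
The weight `(n - 1) v_g + v_{-g}` is additive and takes the value `n` on each atom modulo
`(n - 2) n` (the factor `n` is needed since `2` need not be invertible modulo `n - 2`),
so every factorization of `B` into `k` atoms gives the same residue of `k n`;
hence any two lengths of `B` are congruent modulo `n - 2` and `min Δ(G₀) ≥ n - 2`. The sequence
`gⁿ(-g)ⁿ` has the lengths `2` and `n`, so `n - 2 ∈ Δ(G₀)`.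
-/

section DistSet

variable {L : Set ℕ} {m : ℕ}

theorem mem_distSet_of_modEq (hm : 0 < m) (hL : ∀ x ∈ L, ∀ y ∈ L, x ≡ y [MOD m]) {a : ℕ}
    (ha : a ∈ L) (hb : a + m ∈ L) : m ∈ distSet L := by
  refine ⟨a, ha, a + m, hb, by omega, by omega, fun c hc hac hcb => ?_⟩
  have := Nat.le_of_dvd (by omega) ((Nat.modEq_iff_dvd' hac.le).1 (hL a ha c hc))
  omega

theorem le_of_mem_distSet_of_modEq (hL : ∀ x ∈ L, ∀ y ∈ L, x ≡ y [MOD m]) {d : ℕ}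
    (hd : d ∈ distSet L) : m ≤ d := by
  obtain ⟨a, ha, b, hb, hab, rfl, -⟩ := hd
  exact Nat.le_of_dvd (by omega) ((Nat.modEq_iff_dvd' hab.le).1 (hL a ha b hb))

end DistSet

section Atoms

variable {G : Type*} [AddCommGroup G] {G₀ : Set G}

theorem IsAtomOver.eq_of_le {A B : Multiset G} (hA : IsAtomOver G₀ A) (hBA : B ≤ A)
    (hB : B ≠ 0) (hsum : B.sum = 0) : B = A :=
  by_contra fun hne => hA.2.2 B hBA hB hne hsum

theorem addOrderOf_pos_and_le_of_sum_replicate_eq_zero {x : G} {k : ℕ} (hk : k ≠ 0)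
    (hsum : (Multiset.replicate k x).sum = 0) : 0 < addOrderOf x ∧ addOrderOf x ≤ k := by
  rw [Multiset.sum_replicate] at hsum
  have hdvd := addOrderOf_dvd_of_nsmul_eq_zero hsum
  have hk := Nat.pos_of_ne_zero hk
  exact ⟨Nat.pos_of_dvd_of_pos hdvd hk, Nat.le_of_dvd hk hdvd⟩

theorem isAtomOver_replicate_addOrderOf {x : G} (hx : x ∈ G₀) (hpos : 0 < addOrderOf x) :
    IsAtomOver G₀ (Multiset.replicate (addOrderOf x) x) := by
  refine ⟨⟨fun y hy => Multiset.eq_of_mem_replicate hy ▸ hx, ?_⟩, ?_, ?_⟩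
  · rw [Multiset.sum_replicate, addOrderOf_nsmul_eq_zero]
  · exact Multiset.card_pos.1 (by rwa [Multiset.card_replicate])
  · intro B hB hB0 hBA hsum
    obtain ⟨k, hk, rfl⟩ := Multiset.le_replicate_iff.1 hB
    have hk0 : k ≠ 0 := by rintro rfl; exact hB0 rfl
    have := (addOrderOf_pos_and_le_of_sum_replicate_eq_zero hk0 hsum).2
    exact hBA (by rw [le_antisymm hk this])

theorem IsAtomOver.eq_replicate_addOrderOf {A : Multiset G} {x : G} (hA : IsAtomOver G₀ A)
    (hx : ∀ y ∈ A, y = x) : A = Multiset.replicate (addOrderOf x) x := by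
  have hAx := Multiset.eq_replicate_of_mem hx
  have hcard : Multiset.card A ≠ 0 := by simpa using hA.2.1
  obtain ⟨hpos, hle⟩ := addOrderOf_pos_and_le_of_sum_replicate_eq_zero hcard (hAx ▸ hA.1.2)
  refine (hA.eq_of_le ?_ (Multiset.card_pos.1 (by rwa [Multiset.card_replicate])) ?_).symm
  · rw [hAx]; exact (Multiset.replicate_le_replicate x).2 hle
  · rw [Multiset.sum_replicate, addOrderOf_nsmul_eq_zero]

theorem isAtomOver_pair {g : G} (hg : g ≠ 0) : IsAtomOver {g, -g} ({g, -g} : Multiset G) := by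
  refine ⟨⟨by simp, by simp⟩, by simp, fun B hB hB0 hBA hsum => ?_⟩
  have hcard : Multiset.card B ≤ 2 := by simpa using Multiset.card_le_card hB
  obtain h2 | h1 : Multiset.card B = 2 ∨ Multiset.card B = 1 := by
    have : Multiset.card B ≠ 0 := by simpa using hB0
    omega
  · exact hBA (Multiset.eq_of_le_of_card_le hB (by simp [h2]))
  · obtain ⟨x, rfl⟩ := Multiset.card_eq_one.1 h1
    have hx : x = g ∨ x = -g := by simpa using Multiset.singleton_le.1 hB
    simp only [Multiset.sum_singleton] at hsum
    rcases hx with rfl | rfl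
    · exact hg hsum
    · exact hg (neg_eq_zero.1 hsum)

theorem IsAtomOver.pair_cases {g : G} (hg : g ≠ -g) {A : Multiset G}
    (hA : IsAtomOver {g, -g} A) :
    A = {g, -g} ∨ A = Multiset.replicate (addOrderOf g) g ∨
      A = Multiset.replicate (addOrderOf g) (-g) := by
  classical
  have hmem : ∀ y ∈ A, y = g ∨ y = -g := hA.1.1
  by_cases hgA : g ∈ A
  · by_cases hngA : -g ∈ A
    · left
      refine (hA.eq_of_le ?_ (by simp) (by simp)).symm
      refine (Multiset.le_iff_subset (by simpa using hg)).2 ?_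
      simp [Multiset.insert_eq_cons, Multiset.cons_subset, hgA, hngA]
    · exact Or.inr <| Or.inl <| hA.eq_replicate_addOrderOf fun y hy =>
        (hmem y hy).resolve_right fun h => hngA (h ▸ hy)
  · refine Or.inr <| Or.inr ?_
    rw [← addOrderOf_neg]
    exact hA.eq_replicate_addOrderOf fun y hy => (hmem y hy).resolve_left fun h => hgA (h ▸ hy)

end Atoms

section PairWeight

variable {G : Type*} [AddCommGroup G] {g : G}

theorem ne_neg_self_of_three_le_addOrderOf (hg : 3 ≤ addOrderOf g) : g ≠ -g := by
  intro h
  have : addOrderOf g ∣ 2 := addOrderOf_dvd_of_nsmul_eq_zero <| by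
    rw [two_nsmul, ← eq_neg_iff_add_eq_zero]; exact h
  have := Nat.le_of_dvd two_pos this
  omega

noncomputable def pairWeight [DecidableEq G] (g : G) : Multiset G →+ ℕ :=
  (addOrderOf g - 1) • Multiset.countAddMonoidHom g + Multiset.countAddMonoidHom (-g)

theorem pairWeight_apply [DecidableEq G] (A : Multiset G) :
    pairWeight g A = (addOrderOf g - 1) * A.count g + A.count (-g) := rfl

theorem IsAtomOver.pairWeight_modEq [DecidableEq G] (hg : 3 ≤ addOrderOf g) {A : Multiset G}
    (hA : IsAtomOver {g, -g} A) :
    pairWeight g A ≡ addOrderOf g [MOD (addOrderOf g - 2) * addOrderOf g] := by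
  have hne := ne_neg_self_of_three_le_addOrderOf hg
  rcases hA.pair_cases hne with rfl | rfl | rfl
  · rw [pairWeight_apply, Multiset.insert_eq_cons, Multiset.count_cons_self,
      Multiset.count_singleton, if_neg hne, Multiset.count_cons_of_ne hne.symm,
      Multiset.count_singleton_self, show (addOrderOf g - 1) * (0 + 1) + 1 = addOrderOf g by omega]
  · rw [pairWeight_apply, Multiset.count_replicate_self, Multiset.count_replicate,
      if_neg hne, add_zero]
    have hsplit : (addOrderOf g - 1) * addOrderOf g =
        addOrderOf g + (addOrderOf g - 2) * addOrderOf g := by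
      zify [show 1 ≤ addOrderOf g by omega, show 2 ≤ addOrderOf g by omega]
      ring
    rw [hsplit]
    exact Nat.add_mod_right _ _
  · rw [pairWeight_apply, Multiset.count_replicate_self, Multiset.count_replicate,
      if_neg hne.symm, mul_zero, zero_add]

end PairWeight

section Lengths

variable {G : Type*} [AddCommGroup G] {g : G}

theorem lengthSet_pair_modEq (hg : 3 ≤ addOrderOf g) (B : Multiset G) :
    ∀ k₁ ∈ lengthSet {g, -g} B, ∀ k₂ ∈ lengthSet {g, -g} B, k₁ ≡ k₂ [MOD addOrderOf g - 2] := by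
  classical
  have hweight : ∀ k ∈ lengthSet {g, -g} B,
      pairWeight g B ≡ k * addOrderOf g [MOD (addOrderOf g - 2) * addOrderOf g] := by
    rintro k ⟨f, rfl, hf, rfl⟩
    rw [map_multiset_sum]
    calc (f.map (pairWeight g)).sum
        ≡ (f.map fun _ => addOrderOf g).sum [MOD (addOrderOf g - 2) * addOrderOf g] :=
          Nat.ModEq.multisetSum_map fun A hA => (hf A hA).pairWeight_modEq hg
      _ = Multiset.card f * addOrderOf g := by
          rw [Multiset.map_const', Multiset.sum_replicate, smul_eq_mul]
  intro k₁ h₁ k₂ h₂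
  exact Nat.ModEq.mul_right_cancel' (by omega) ((hweight k₁ h₁).symm.trans (hweight k₂ h₂))

theorem two_mem_lengthSet_pair (hg : 0 < addOrderOf g) :
    2 ∈ lengthSet {g, -g} (addOrderOf g • ({g, -g} : Multiset G)) := by
  refine ⟨{Multiset.replicate (addOrderOf g) g, Multiset.replicate (addOrderOf g) (-g)},
    rfl, ?_, ?_⟩
  · intro A hA
    rcases Multiset.mem_cons.1 hA with rfl | hA
    · exact isAtomOver_replicate_addOrderOf (by simp) hg
    · rw [Multiset.mem_singleton.1 hA, ← addOrderOf_neg]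
      exact isAtomOver_replicate_addOrderOf (by simp) (by rwa [addOrderOf_neg])
  · rw [show ({g, -g} : Multiset G) = {g} + {-g} from rfl, nsmul_add,
      Multiset.nsmul_singleton, Multiset.nsmul_singleton]
    simp [Multiset.insert_eq_cons]

theorem addOrderOf_mem_lengthSet_pair (hg : g ≠ 0) :
    addOrderOf g ∈ lengthSet {g, -g} (addOrderOf g • ({g, -g} : Multiset G)) :=
  ⟨Multiset.replicate (addOrderOf g) {g, -g}, Multiset.card_replicate _ _,
    fun _ hA => Multiset.eq_of_mem_replicate hA ▸ isAtomOver_pair hg,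
    Multiset.sum_replicate _ _⟩

theorem addOrderOf_sub_two_mem_DeltaStar (hg : 3 ≤ addOrderOf g) :
    addOrderOf g - 2 ∈ DeltaStar G := by
  have hg0 : g ≠ 0 := by rintro rfl; simp at hg
  have hmem : addOrderOf g - 2 ∈ DeltaOf ({g, -g} : Set G) := by
    refine Set.mem_iUnion₂.2 ⟨addOrderOf g • {g, -g}, Multiset.card_pos.1 (by
      rw [Multiset.card_nsmul]; exact Nat.mul_pos (by omega) (by simp)),
      mem_distSet_of_modEq (by omega) (lengthSet_pair_modEq hg _)
        (two_mem_lengthSet_pair (by omega)) ?_⟩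
    rw [show 2 + (addOrderOf g - 2) = addOrderOf g by omega]
    exact addOrderOf_mem_lengthSet_pair hg0
  refine ⟨{g, -g}, ⟨_, hmem⟩, IsLeast.csInf_eq ⟨hmem, fun d hd => ?_⟩⟩
  obtain ⟨B, -, hd⟩ := Set.mem_iUnion₂.1 hd
  exact le_of_mem_distSet_of_modEq (lengthSet_pair_modEq hg B) hd

end Lengths

theorem ord_sub_two_mem_DeltaStar
    (G : Type*) [AddCommGroup G] [Fintype G] :
    (∀ g : G, 3 ≤ addOrderOf g → addOrderOf g - 2 ∈ DeltaStar G) ∧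
    (3 ≤ AddMonoid.exponent G → AddMonoid.exponent G - 2 ∈ DeltaStar G) := by
  refine ⟨fun g hg => addOrderOf_sub_two_mem_DeltaStar hg, fun hexp => ?_⟩
  obtain ⟨g, hg⟩ :=
    AddMonoid.exists_addOrderOf_eq_exponent (G := G) AddMonoid.ExponentExists.of_finite
  rw [← hg] at hexp ⊢
  exact addOrderOf_sub_two_mem_DeltaStar hexp
end

section
/- Let G be a finite abelian group and G₀ ⊆ G a subset. If there exists an atom U ∈ A(G₀) with cross number k(U) < 1, then Δ(G₀) ≠ ∅ and min Δ(G₀) ≤ exp(G) − 2. -/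
/- Common definitions for zero-sum theory over a finite abelian group. -/

variable {G : Type*} [AddCommGroup G]

private lemma multiset_sum_bind {α β : Type*} (s : Multiset α)
    (f : α → Multiset (Multiset β)) :
    (s.bind f).sum = (s.map fun a => (f a).sum).sum := by
  induction s using Multiset.induction_on with
  | empty => simp
  | cons a s ih => simp [ih]

private lemma sum_map_replicate {β : Type*} (n : ℕ) (U : Multiset β) :
    (U.map fun g => Multiset.replicate n g).sum = n • U := by
  induction U using Multiset.induction_on with
  | empty => simp
  | cons a s ih =>
    simp only [Multiset.map_cons, Multiset.sum_cons, ih, Multiset.nsmul_cons,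
      Multiset.nsmul_singleton]

private lemma isAtom_replicate_order {G : Type*} [AddCommGroup G] (G₀ : Set G) {g : G}
    (hg : g ∈ G₀) (hpos : 0 < addOrderOf g) :
    IsAtomOver G₀ (Multiset.replicate (addOrderOf g) g) := by
  refine ⟨⟨fun x hx => ?_, ?_⟩, ?_, ?_⟩
  · rw [Multiset.eq_of_mem_replicate hx]; exact hg
  · rw [Multiset.sum_replicate]; exact addOrderOf_nsmul_eq_zero g
  · exact fun h => hpos.ne' (by simpa using congrArg Multiset.card h)
  · intro B hB hB0 hBA hsum
    obtain ⟨k, hk, rfl⟩ := Multiset.le_replicate_iff.mp hB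
    rw [Multiset.sum_replicate] at hsum
    have hdvd : addOrderOf g ∣ k := addOrderOf_dvd_iff_nsmul_eq_zero.mpr hsum
    have hk0 : k ≠ 0 := by
      intro h; exact hB0 (by simp [h])
    have : addOrderOf g ≤ k := Nat.le_of_dvd (Nat.pos_of_ne_zero hk0) hdvd
    exact hBA (by rw [le_antisymm hk this])

theorem minDelta_le_exponent_sub_two_of_small_cross_number
    (G : Type*) [AddCommGroup G] [Fintype G] (G₀ : Set G)
    (hU : ∃ U : Multiset G, IsAtomOver G₀ U ∧ crossNumber U < 1) :
    (DeltaOf G₀).Nonempty ∧ sInf (DeltaOf G₀) ≤ AddMonoid.exponent G - 2 := by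
  classical
  obtain ⟨U, hUatom, hUk⟩ := hU
  obtain ⟨⟨hUmem, hUsum⟩, hUne, hUmin⟩ := hUatom
  set n := AddMonoid.exponent G with hn
  have hnpos : 0 < n := Nat.pos_of_ne_zero AddMonoid.exponent_ne_zero_of_finite
  have hordpos : ∀ g : G, 0 < addOrderOf g := fun g => addOrderOf_pos g
  have horddvd : ∀ g : G, addOrderOf g ∣ n := fun g => AddMonoid.addOrder_dvd_exponent g
  -- card U ≥ 2
  have hcard2 : 2 ≤ Multiset.card U := by
    rcases Nat.lt_or_ge (Multiset.card U) 2 with h | h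
    · interval_cases h' : Multiset.card U
      · exact absurd (Multiset.card_eq_zero.mp h') hUne
      · obtain ⟨a, rfl⟩ := Multiset.card_eq_one.mp h'
        have ha : a = 0 := by simpa using hUsum
        rw [ha] at hUk
        simp [crossNumber] at hUk
    · exact h
  set B : Multiset G := n • U with hB
  have hBne : B ≠ 0 := by
    intro h
    have := congrArg Multiset.card h
    rw [Multiset.card_nsmul] at this
    simp only [Multiset.card_zero] at this
    rcases Nat.mul_eq_zero.mp this with h' | h'
    · exact hnpos.ne' h'
    · omega
  -- length n
  have hnlen : n ∈ lengthSet G₀ B := by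
    refine ⟨Multiset.replicate n U, Multiset.card_replicate _ _, ?_, ?_⟩
    · intro A hA
      rw [Multiset.eq_of_mem_replicate hA]
      exact ⟨⟨hUmem, hUsum⟩, hUne, hUmin⟩
    · rw [Multiset.sum_replicate]
  -- length k₂
  set k₂ : ℕ := (U.map fun g => n / addOrderOf g).sum with hk₂
  have hk₂len : k₂ ∈ lengthSet G₀ B := by
    refine ⟨U.bind fun g => Multiset.replicate (n / addOrderOf g)
      (Multiset.replicate (addOrderOf g) g), ?_, ?_, ?_⟩
    · rw [Multiset.card_bind]
      congr 1
      exact Multiset.map_congr rfl fun g _ => by simp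
    · intro A hA
      obtain ⟨g, hgU, hgA⟩ := Multiset.mem_bind.mp hA
      rw [Multiset.eq_of_mem_replicate hgA]
      exact isAtom_replicate_order G₀ (hUmem g hgU) (hordpos g)
    · rw [multiset_sum_bind]
      have : (U.map fun g => (Multiset.replicate (n / addOrderOf g)
          (Multiset.replicate (addOrderOf g) g)).sum)
          = U.map fun g => Multiset.replicate n g := by
        refine Multiset.map_congr rfl fun g _ => ?_
        rw [Multiset.sum_replicate, Multiset.nsmul_replicate,
          Nat.div_mul_cancel (horddvd g)]
      rw [this, sum_map_replicate]
  -- k₂ ≥ 2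
  have hk₂ge : 2 ≤ k₂ := by
    have h1 : ∀ g ∈ U, 1 ≤ n / addOrderOf g := fun g _ =>
      (Nat.one_le_div_iff (hordpos g)).mpr (Nat.le_of_dvd hnpos (horddvd g))
    have : (U.map fun _ => 1).sum ≤ k₂ :=
      Multiset.sum_map_le_sum_map _ _ h1
    simp only [Multiset.map_const', Multiset.sum_replicate, smul_eq_mul, mul_one] at this
    omega
  -- k₂ < n
  have hk₂lt : k₂ < n := by
    have hcast : (k₂ : ℚ) = n * crossNumber U := by
      rw [hk₂, Nat.cast_multiset_sum, Multiset.map_map, crossNumber,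
        ← Multiset.sum_map_mul_left]
      refine congrArg Multiset.sum (Multiset.map_congr rfl fun g _ => ?_)
      simp only [Function.comp_apply]
      rw [Nat.cast_div (horddvd g) (by exact_mod_cast (hordpos g).ne'), div_eq_mul_inv]
    have : (k₂ : ℚ) < n := by
      rw [hcast]
      calc (n : ℚ) * crossNumber U < n * 1 := by
            exact mul_lt_mul_of_pos_left hUk (by exact_mod_cast hnpos)
        _ = n := mul_one _
    exact_mod_cast this
  -- the gap
  set S : Set ℕ := {c | c ∈ lengthSet G₀ B ∧ c < n} with hS
  have hSne : S.Nonempty := ⟨k₂, hk₂len, hk₂lt⟩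
  have hSbdd : BddAbove S := ⟨n, fun c hc => hc.2.le⟩
  set a := sSup S with ha
  have haS : a ∈ S := Nat.sSup_mem hSne hSbdd
  have hak₂ : k₂ ≤ a := le_csSup hSbdd ⟨hk₂len, hk₂lt⟩
  have hd : (n - a) ∈ DeltaOf G₀ := by
    refine Set.mem_iUnion.mpr ⟨B, Set.mem_iUnion.mpr ⟨hBne, ?_⟩⟩
    refine ⟨a, haS.1, n, hnlen, haS.2, rfl, fun c hc hac hcn => ?_⟩
    exact absurd (le_csSup hSbdd ⟨hc, hcn⟩) (not_le.mpr hac)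
  refine ⟨⟨n - a, hd⟩, ?_⟩
  calc sInf (DeltaOf G₀) ≤ n - a := Nat.sInf_le hd
    _ ≤ n - 2 := Nat.sub_le_sub_left (le_trans hk₂ge hak₂) n
end

section
/- Let G be a finite abelian group and G₀ ⊆ G a subset. If G₀ is an LCN-set with Δ(G₀) ≠ ∅, then min Δ(G₀) ≤ |G₀| − 2. -/
/- Common definitions for zero-sum theory over a finite abelian group. -/

variable {G : Type*} [AddCommGroup G]

/-!
If `Δ(G₀) ≠ ∅`, some `B` has factorizations of lengths `a < b`. Since every atom has cross number
at least `1`, `b ≤ k(B)`, so the shorter factorization contains an atom `U` with `k(U) > 1`. Such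
an atom satisfies `v_g(U) < ord(g)` for all `g`, hence `U · C = B' := ∏_{g ∈ supp U} g^{ord(g)}`
for a nonempty zero-sum sequence `C` with `k(C) = |supp U| - k(U) < |supp U| - 1`. Now `B'` factors
into the `|supp U|` atoms `g^{ord(g)}`, and also as `U` times a factorization of `C` into
`1 ≤ t ≤ k(C)` atoms. So `1 + t < |supp U|` are both lengths of `B'`, and some distance of `L(B')`
is at most `|supp U| - 1 - t ≤ |supp U| - 2 ≤ |G₀| - 2`.
-/

open Multiset

section CrossNumber

@[simp]
lemma crossNumber_zero : crossNumber (0 : Multiset G) = 0 := by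
  simp [crossNumber]

@[simp]
lemma crossNumber_add (S T : Multiset G) :
    crossNumber (S + T) = crossNumber S + crossNumber T := by
  simp [crossNumber]

lemma crossNumber_multiset_sum (f : Multiset (Multiset G)) :
    crossNumber f.sum = (f.map crossNumber).sum :=
  Multiset.induction_on f (by simp) fun A f ih => by simp [ih]

lemma crossNumber_finset_sum {ι : Type*} (s : Finset ι) (F : ι → Multiset G) :
    crossNumber (∑ i ∈ s, F i) = ∑ i ∈ s, crossNumber (F i) := by
  classical
  induction s using Finset.induction_on with
  | empty => simp
  | insert a s ha ih => rw [Finset.sum_insert ha, Finset.sum_insert ha, crossNumber_add, ih]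

lemma sum_replicate_addOrderOf (g : G) : (replicate (addOrderOf g) g).sum = 0 := by
  rw [sum_replicate, addOrderOf_nsmul_eq_zero]

variable [Finite G]

lemma replicate_addOrderOf_ne_zero (g : G) : replicate (addOrderOf g) g ≠ 0 := fun h => by
  simpa [(addOrderOf_pos g).ne'] using congrArg card h

lemma crossNumber_replicate_addOrderOf (g : G) :
    crossNumber (replicate (addOrderOf g) g) = 1 := by
  have : (addOrderOf g : ℚ) ≠ 0 := by exact_mod_cast (addOrderOf_pos g).ne'
  simp [crossNumber, map_replicate, sum_replicate, this]

end CrossNumber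

section Factorizations

variable {G₀ : Set G}

lemma mem_deltaOf {B : Multiset G} {d : ℕ} (hB : B ≠ 0) (hd : d ∈ distSet (lengthSet G₀ B)) :
    d ∈ DeltaOf G₀ :=
  Set.mem_iUnion₂.2 ⟨B, hB, hd⟩

lemma exists_mem_distSet_le {L : Set ℕ} {a b : ℕ} (ha : a ∈ L) (hb : b ∈ L) (hab : a < b) :
    ∃ d ∈ distSet L, d ≤ b - a := by
  classical
  have hex : ∃ c, c ∈ L ∧ a < c := ⟨b, hb, hab⟩
  obtain ⟨hcL, hac⟩ := Nat.find_spec hex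
  refine ⟨Nat.find hex - a,
    ⟨a, ha, _, hcL, hac, rfl, fun c hc h₁ h₂ => Nat.find_min hex h₂ ⟨hc, h₁⟩⟩, ?_⟩
  have := Nat.find_min' hex ⟨hb, hab⟩
  omega

lemma one_mem_lengthSet {A : Multiset G} (hA : IsAtomOver G₀ A) : 1 ∈ lengthSet G₀ A :=
  ⟨{A}, rfl, by simpa using hA, by simp⟩

lemma pos_of_mem_lengthSet {S : Multiset G} {k : ℕ} (hS : S ≠ 0) (hk : k ∈ lengthSet G₀ S) :
    0 < k := by
  obtain ⟨f, rfl, -, rfl⟩ := hk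
  exact card_pos.2 (by rintro rfl; exact hS sum_zero)

lemma add_mem_lengthSet {S T : Multiset G} {k l : ℕ} (hk : k ∈ lengthSet G₀ S)
    (hl : l ∈ lengthSet G₀ T) : k + l ∈ lengthSet G₀ (S + T) := by
  obtain ⟨f, rfl, hf, rfl⟩ := hk
  obtain ⟨f', rfl, hf', rfl⟩ := hl
  refine ⟨f + f', card_add f f', fun A hA => ?_, sum_add f f'⟩
  rcases mem_add.1 hA with hA | hA
  exacts [hf A hA, hf' A hA]

lemma IsZeroSumSeq.lengthSet_nonempty {S : Multiset G} (hS : IsZeroSumSeq G₀ S) :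
    (lengthSet G₀ S).Nonempty := by
  classical
  induction S using Multiset.strongInductionOn with
  | ih S ih =>
    by_cases hS0 : S = 0
    · exact ⟨0, 0, rfl, by simp, by simp [hS0]⟩
    by_cases hA : IsAtomOver G₀ S
    · exact ⟨1, one_mem_lengthSet hA⟩
    obtain ⟨B, hBS, hB0, hBne, hBsum⟩ : ∃ B ≤ S, B ≠ 0 ∧ B ≠ S ∧ B.sum = 0 := by
      simpa [IsAtomOver, hS, hS0] using hA
    have hsplit : S - B + B = S := tsub_add_cancel_of_le hBS
    have hB : IsZeroSumSeq G₀ B := ⟨fun g hg => hS.1 g (mem_of_le hBS hg), hBsum⟩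
    have hSB : IsZeroSumSeq G₀ (S - B) := by
      refine ⟨fun g hg => hS.1 g (mem_of_le tsub_le_self hg), ?_⟩
      simpa [hBsum, hS.2] using congrArg Multiset.sum hsplit
    obtain ⟨k, hk⟩ := ih B (lt_of_le_of_ne hBS hBne) hB
    have hSB_lt : S - B < S := lt_of_le_of_ne tsub_le_self fun h => by
      rw [h] at hsplit
      exact hB0 (add_eq_left.1 hsplit)
    obtain ⟨l, hl⟩ := ih (S - B) hSB_lt hSB
    exact ⟨l + k, hsplit ▸ add_mem_lengthSet hl hk⟩

end Factorizations

section Atoms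

variable [Finite G] {G₀ : Set G}

lemma isAtomOver_replicate_addOrderOf_s13 {g : G} (hg : g ∈ G₀) :
    IsAtomOver G₀ (replicate (addOrderOf g) g) := by
  refine ⟨⟨fun x hx => eq_of_mem_replicate hx ▸ hg, sum_replicate_addOrderOf g⟩,
    replicate_addOrderOf_ne_zero g, fun B hB hB0 hBne hBsum => hBne ?_⟩
  obtain ⟨k, hk, rfl⟩ := le_replicate_iff.1 hB
  have hk0 : k ≠ 0 := by rintro rfl; exact hB0 rfl
  rw [sum_replicate, ← addOrderOf_dvd_iff_nsmul_eq_zero] at hBsum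
  rw [le_antisymm hk (Nat.le_of_dvd (Nat.pos_of_ne_zero hk0) hBsum)]

lemma IsAtomOver.count_lt_addOrderOf [DecidableEq G] {U : Multiset G} (hU : IsAtomOver G₀ U)
    (hk : crossNumber U ≠ 1) (g : G) : U.count g < addOrderOf g := by
  by_contra! h
  have hle : replicate (addOrderOf g) g ≤ U := le_count_iff_replicate_le.1 h
  have heq : replicate (addOrderOf g) g = U := by
    by_contra hne
    exact hU.2.2 _ hle (replicate_addOrderOf_ne_zero g) hne (sum_replicate_addOrderOf g)
  exact hk (heq ▸ crossNumber_replicate_addOrderOf g)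

end Atoms

section LCN

variable {G₀ : Set G}

lemma IsLCNSet.le_crossNumber (hLCN : IsLCNSet G₀) {B : Multiset G} {k : ℕ}
    (hk : k ∈ lengthSet G₀ B) : (k : ℚ) ≤ crossNumber B := by
  obtain ⟨f, rfl, hf, rfl⟩ := hk
  rw [crossNumber_multiset_sum]
  simpa using card_nsmul_le_sum (s := f.map crossNumber) (a := 1)
    (by simpa using fun A hA => hLCN A (hf A hA))

lemma IsLCNSet.exists_isAtomOver_one_lt_crossNumber (hLCN : IsLCNSet G₀) {B : Multiset G}
    {a b : ℕ} (ha : a ∈ lengthSet G₀ B) (hb : b ∈ lengthSet G₀ B) (hab : a < b) :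
    ∃ U, IsAtomOver G₀ U ∧ 1 < crossNumber U := by
  obtain ⟨f, rfl, hf, rfl⟩ := ha
  by_contra! hle
  have hshort : crossNumber f.sum ≤ f.card := by
    rw [crossNumber_multiset_sum]
    simpa using sum_le_card_nsmul (f.map crossNumber) 1
      (by simpa using fun A hA => hle A (hf A hA))
  have hlong := hLCN.le_crossNumber hb
  exact not_le.2 hab (by exact_mod_cast hlong.trans hshort)

end LCN

section OrderPowers

/-- The zero-sum sequence `∏_{g ∈ s} g^{ord(g)}`. -/
noncomputable def orderPowers (s : Finset G) : Multiset G :=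
  ∑ g ∈ s, replicate (addOrderOf g) g

/-- The sequence `C` with `U · C = ∏_{g ∈ supp U} g^{ord(g)}`, meaningful when
`v_g(U) ≤ ord(g)` for all `g` (the subtraction truncates). -/
noncomputable def orderComplement [DecidableEq G] (U : Multiset G) : Multiset G :=
  ∑ g ∈ U.toFinset, replicate (addOrderOf g - U.count g) g

lemma sum_orderPowers (s : Finset G) : (orderPowers s).sum = 0 := by
  rw [orderPowers, ← coe_sumAddMonoidHom, map_sum]
  exact Finset.sum_eq_zero fun g _ => sum_replicate_addOrderOf g

lemma add_orderComplement [DecidableEq G] {U : Multiset G}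
    (hU : ∀ g, U.count g ≤ addOrderOf g) : U + orderComplement U = orderPowers U.toFinset := by
  rw [orderComplement, orderPowers]
  conv_lhs => enter [1]; rw [← toFinset_sum_count_nsmul_eq U]
  rw [← Finset.sum_add_distrib]
  refine Finset.sum_congr rfl fun g _ => ?_
  rw [nsmul_singleton, ← replicate_add, Nat.add_sub_cancel' (hU g)]

lemma isZeroSumSeq_orderComplement [DecidableEq G] {G₀ : Set G} {U : Multiset G}
    (hU : IsZeroSumSeq G₀ U) (hcount : ∀ g, U.count g ≤ addOrderOf g) :
    IsZeroSumSeq G₀ (orderComplement U) := by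
  refine ⟨fun g hg => ?_, ?_⟩
  · obtain ⟨x, hx, hgx⟩ := mem_sum.1 hg
    exact eq_of_mem_replicate hgx ▸ hU.1 x (mem_toFinset.1 hx)
  · simpa [hU.2, sum_orderPowers] using congrArg Multiset.sum (add_orderComplement hcount)

lemma orderComplement_ne_zero [DecidableEq G] {U : Multiset G} (hU : U ≠ 0)
    (hcount : ∀ g, U.count g < addOrderOf g) : orderComplement U ≠ 0 := by
  obtain ⟨g, hg⟩ := exists_mem_of_ne_zero hU
  have hgC : g ∈ orderComplement U :=
    mem_sum.2 ⟨g, mem_toFinset.2 hg, mem_replicate.2 ⟨Nat.sub_ne_zero_of_lt (hcount g), rfl⟩⟩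
  rintro hC
  simp [hC] at hgC

variable [Finite G]

lemma crossNumber_orderPowers (s : Finset G) : crossNumber (orderPowers s) = s.card := by
  simp [orderPowers, crossNumber_finset_sum, crossNumber_replicate_addOrderOf]

lemma card_mem_lengthSet_orderPowers {G₀ : Set G} {s : Finset G} (hs : ↑s ⊆ G₀) :
    s.card ∈ lengthSet G₀ (orderPowers s) := by
  refine ⟨s.val.map fun g => replicate (addOrderOf g) g, card_map _ _, fun A hA => ?_, rfl⟩
  obtain ⟨g, hg, rfl⟩ := mem_map.1 hA
  exact isAtomOver_replicate_addOrderOf_s13 (hs hg)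

end OrderPowers

lemma IsLCNSet.exists_mem_deltaOf_le_card_sub_two [Finite G] [DecidableEq G] {G₀ : Set G}
    (hLCN : IsLCNSet G₀) {U : Multiset G} (hU : IsAtomOver G₀ U) (hkU : 1 < crossNumber U) :
    ∃ d ∈ DeltaOf G₀, d ≤ U.toFinset.card - 2 := by
  have hlt := hU.count_lt_addOrderOf hkU.ne'
  have hcount g : U.count g ≤ addOrderOf g := (hlt g).le
  have hsplit := add_orderComplement hcount
  obtain ⟨t, ht⟩ := (isZeroSumSeq_orderComplement hU.1 hcount).lengthSet_nonempty
  have hlong : U.toFinset.card ∈ lengthSet G₀ (orderPowers U.toFinset) :=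
    card_mem_lengthSet_orderPowers fun g hg => hU.1.1 g (mem_toFinset.1 hg)
  have hshort : 1 + t ∈ lengthSet G₀ (orderPowers U.toFinset) :=
    hsplit ▸ add_mem_lengthSet (one_mem_lengthSet hU) ht
  have ht0 : 0 < t := pos_of_mem_lengthSet (orderComplement_ne_zero hU.2.1 hlt) ht
  have hgap : 1 + t < U.toFinset.card := by
    have hkC : crossNumber U + crossNumber (orderComplement U) = U.toFinset.card := by
      rw [← crossNumber_add, hsplit, crossNumber_orderPowers]
    have := hLCN.le_crossNumber ht
    exact_mod_cast (by linarith : (1 + t : ℚ) < U.toFinset.card)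
  have hne : orderPowers U.toFinset ≠ 0 := by
    rw [← hsplit]
    exact fun h => hU.2.1 (add_eq_zero.1 h).1
  obtain ⟨d, hd, hdle⟩ := exists_mem_distSet_le hshort hlong hgap
  exact ⟨d, mem_deltaOf hne hd, by omega⟩

theorem minDelta_le_card_sub_two_of_LCN
    (G : Type*) [AddCommGroup G] [Fintype G] (G₀ : Set G)
    (hLCN : IsLCNSet G₀) (hne : (DeltaOf G₀).Nonempty) :
    sInf (DeltaOf G₀) ≤ G₀.ncard - 2 := by
  classical
  obtain ⟨d₀, hd₀⟩ := hne
  obtain ⟨B, -, a, ha, b, hb, hab, -⟩ := Set.mem_iUnion₂.1 hd₀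
  obtain ⟨U, hU, hkU⟩ := hLCN.exists_isAtomOver_one_lt_crossNumber ha hb hab
  obtain ⟨d, hd, hdU⟩ := hLCN.exists_mem_deltaOf_le_card_sub_two hU hkU
  have hsupp : U.toFinset.card ≤ G₀.ncard := by
    rw [← Set.ncard_coe_finset]
    exact Set.ncard_le_ncard (fun g hg => hU.1.1 g (mem_toFinset.1 hg)) G₀.toFinite
  calc sInf (DeltaOf G₀) ≤ d := Nat.sInf_le hd
    _ ≤ U.toFinset.card - 2 := hdU
    _ ≤ G₀.ncard - 2 := Nat.sub_le_sub_right hsupp 2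
end

section
/- Let G be a finite abelian group, G₀ ⊆ G a subset, and g ∈ G₀ \ {0} with g ∈ ⟨G₀ \ {g}⟩. If ord(g) is a prime power, then there exists a subset E ⊆ G₀ \ {g} with |E| ≤ r(G) such that g ∈ ⟨E⟩. -/
/- Common definitions for zero-sum theory over a finite abelian group. -/

variable {G : Type*} [AddCommGroup G]

/- Multiplying by the `p'`-part `m` of `|G|` moves every generator into the `p`-primary
component, and loses nothing about `g` because `m` is invertible modulo `ord g`.
A finite abelian `p`-group `H` spanned by more than `r` elements has a redundant one:
`|H / pH| = |H[p]| ≤ p ^ r`, so two distinct coefficient vectors modulo `p` agree modulo `pH`.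
This gives an integer relation with a coefficient prime to `p`, and that coefficient can be
inverted modulo the `p`-power order of its generator. Discarding redundant generators until at
most `r` remain does not change the span. -/

open Submodule (span)

theorem IsRank.card_ker_nsmul_le {r : ℕ} (hr : IsRank G r) {n : ℕ} (hn : 0 < n)
    (H : AddSubgroup G) : Nat.card (nsmulAddMonoidHom (α := H) n).ker ≤ n ^ r := by
  obtain ⟨d, hd, -, ⟨e⟩⟩ := hr
  have : ∀ i, NeZero (d i) := fun i => ⟨by have := hd i; omega⟩
  let F : (nsmulAddMonoidHom (α := H) n).ker → ∀ i, {y : ZMod (d i) // n • y = 0} :=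
    fun x i => ⟨e x.1 i, by
      rw [← Pi.smul_apply, ← map_nsmul, ← AddSubgroup.coe_nsmul, ← nsmulAddMonoidHom_apply,
        x.2, ZeroMemClass.coe_zero, map_zero, Pi.zero_apply]⟩
  have hF : Function.Injective F := fun x y hxy =>
    Subtype.ext <| Subtype.ext <| e.injective <| funext fun i =>
      congrArg Subtype.val (congrFun hxy i)
  calc Nat.card (nsmulAddMonoidHom (α := H) n).ker
      ≤ Nat.card (∀ i, {y : ZMod (d i) // n • y = 0}) := Nat.card_le_card_of_injective F hF
    _ = ∏ i, Nat.card {y : ZMod (d i) // n • y = 0} := Nat.card_pi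
    _ ≤ ∏ _i : Fin r, n := Finset.prod_le_prod' fun i _ => by
        simpa [Nat.card_eq_fintype_card, Fintype.card_subtype] using
          IsAddCyclic.card_nsmul_eq_zero_le (α := ZMod (d i)) hn
    _ = n ^ r := by simp

theorem exists_sum_zsmul_eq_zero_not_dvd [Finite G] {r : ℕ} (hr : IsRank G r) {p : ℕ}
    (hp : 1 < p) {ι : Type*} (v : ι → G) (s : Finset ι) (hs : r < s.card) :
    ∃ e : s → ℤ, ∑ i, e i • v i = 0 ∧ ∃ j, ¬ (p : ℤ) ∣ e j := by
  set H : AddSubgroup G := (span ℤ (v '' s)).toAddSubgroup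
  have hmem : ∀ c : s → ZMod p, ∑ i, ((c i).val : ℤ) • v i ∈ H := fun c =>
    Submodule.sum_mem _ fun i _ => Submodule.smul_mem _ _ (Submodule.subset_span ⟨i, i.2, rfl⟩)
  let Φ : (s → ZMod p) → H ⧸ (nsmulAddMonoidHom (α := H) p).range :=
    fun c => QuotientAddGroup.mk ⟨_, hmem c⟩
  have hΦ : ¬ Function.Injective Φ := by
    intro hinj
    have hle := (Nat.card_le_card_of_injective Φ hinj).trans_eq <|
      (AddSubgroup.index_eq_card _).symm.trans AddSubgroup.index_range
    rw [Nat.card_fun, Nat.card_zmod, Nat.card_eq_fintype_card, Fintype.card_coe] at hle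
    have := (Nat.pow_lt_pow_right hp hs).trans_le (hle.trans (hr.card_ker_nsmul_le (by omega) H))
    exact this.false
  obtain ⟨c, c', hΦcc', hne⟩ := Function.not_injective_iff.mp hΦ
  obtain ⟨h, hh⟩ := QuotientAddGroup.eq.mp hΦcc'
  obtain ⟨d, hd⟩ := (Submodule.mem_span_image_finset_iff_exists_fun ℤ).mp h.2
  refine ⟨fun i => (c' i).val - (c i).val - p * d i, ?_, ?_⟩
  · have hh' := congrArg Subtype.val hh
    simp only [nsmulAddMonoidHom_apply, AddSubgroup.coe_nsmul, AddSubgroup.coe_add,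
      AddSubgroup.coe_neg, ← hd] at hh'
    simp only [sub_smul, mul_smul, Finset.sum_sub_distrib, ← Finset.smul_sum]
    rw [natCast_zsmul, hh']
    abel
  · obtain ⟨j, hj⟩ := Function.ne_iff.mp hne
    refine ⟨j, fun hdvd => hj ?_⟩
    have : NeZero p := ⟨by omega⟩
    rw [← ZMod.intCast_zmod_eq_zero_iff_dvd] at hdvd
    simpa [sub_eq_zero, eq_comm] using hdvd

theorem mem_span_image_compl_of_sum_eq_zero {κ : Type*} [Fintype κ] {w : κ → G}
    {e : κ → ℤ} (hw : ∑ i, e i • w i = 0) {j : κ} {n : ℤ} (hj : n • w j = 0)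
    (hcop : IsCoprime (e j) n) : w j ∈ span ℤ (w '' {j}ᶜ) := by
  classical
  obtain ⟨a, b, hab⟩ := hcop
  have hwj : w j = a • (e j • w j) := by
    rw [smul_smul, ← add_zero (_ • _), ← smul_zero b, ← hj, smul_smul, ← add_smul, hab,
      one_smul]
  have hsplit : e j • w j = -∑ i ∈ Finset.univ.erase j, e i • w i :=
    eq_neg_of_add_eq_zero_left <| by
      rwa [Finset.add_sum_erase _ (fun i => e i • w i) (Finset.mem_univ j)]
  rw [hwj, hsplit]
  refine Submodule.smul_mem _ _ <| Submodule.neg_mem _ <| Submodule.sum_mem _ fun i hi => ?_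
  exact Submodule.smul_mem _ _ <| Submodule.subset_span ⟨i, Finset.ne_of_mem_erase hi, rfl⟩

theorem exists_mem_span_image_erase [Finite G] {r : ℕ} (hr : IsRank G r) {p a : ℕ}
    (hp : p.Prime) {ι : Type*} [DecidableEq ι] {v : ι → G} (hv : ∀ i, p ^ a • v i = 0)
    {s : Finset ι} (hs : r < s.card) : ∃ j ∈ s, v j ∈ span ℤ (v '' (s.erase j)) := by
  obtain ⟨e, he, j, hj⟩ := exists_sum_zsmul_eq_zero_not_dvd hr hp.one_lt v s hs
  have hcop : IsCoprime (e j) ((p : ℤ) ^ a) :=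
    ((Nat.prime_iff_prime_int.mp hp).coprime_iff_not_dvd.mpr hj).pow_left.symm
  have hvj : ((p : ℤ) ^ a) • v j = 0 := by rw [← Nat.cast_pow, natCast_zsmul, hv]
  refine ⟨j, j.2, Submodule.span_mono ?_ (mem_span_image_compl_of_sum_eq_zero he hvj hcop)⟩
  rintro _ ⟨i, hi, rfl⟩
  exact ⟨i, Finset.mem_erase.mpr ⟨fun h => hi (Subtype.ext h), i.2⟩, rfl⟩

theorem exists_subset_card_le_span_image_eq [Finite G] {r : ℕ} (hr : IsRank G r) {p a : ℕ}
    (hp : p.Prime) {ι : Type*} {v : ι → G} (hv : ∀ i, p ^ a • v i = 0) (s : Finset ι) :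
    ∃ t ⊆ s, t.card ≤ r ∧ span ℤ (v '' t) = span ℤ (v '' s) := by
  classical
  induction s using Finset.strongInduction with
  | H s ih =>
    by_cases hs : s.card ≤ r
    · exact ⟨s, subset_rfl, hs, rfl⟩
    obtain ⟨j, hj, hmem⟩ := exists_mem_span_image_erase hr hp hv (not_le.mp hs)
    obtain ⟨t, hts, ht, hspan⟩ := ih _ (Finset.erase_ssubset hj)
    refine ⟨t, hts.trans (Finset.erase_subset _ _), ht, hspan.trans ?_⟩
    refine le_antisymm (Submodule.span_mono (Set.image_mono (s.erase_subset j))) ?_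
    rw [Submodule.span_le]
    rintro _ ⟨i, hi, rfl⟩
    obtain rfl | hij := eq_or_ne i j
    · exact hmem
    · exact Submodule.subset_span ⟨i, Finset.mem_erase.mpr ⟨hij, hi⟩, rfl⟩

theorem mem_closure_small_subset_of_primePow_order_general
    (G : Type*) [AddCommGroup G] [Fintype G] (r : ℕ)
    (hr : IsRank G r) (G₀ : Set G) (g : G)
    (hgen : g ∈ AddSubgroup.closure (G₀ \ {g}))
    (hpp : IsPrimePow (addOrderOf g)) :
    ∃ E : Set G, E ⊆ G₀ \ {g} ∧ E.ncard ≤ r ∧ g ∈ AddSubgroup.closure E := by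
  obtain ⟨p, k, hp, -, hord⟩ := (isPrimePow_nat_iff _).mp hpp
  obtain ⟨a, m, hpm, hcard⟩ :=
    Nat.exists_eq_pow_mul_and_not_dvd (Nat.card_pos (α := G)).ne' p hp.ne_one
  have hcop : m.Coprime (addOrderOf g) :=
    hord ▸ ((hp.coprime_iff_not_dvd.mpr hpm).symm.pow_right k)
  let f := DistribSMul.toLinearMap ℤ G m
  have hf : ∀ x, p ^ a • f x = 0 := fun x => by
    rw [DistribSMul.toLinearMap_apply, smul_smul, ← hcard, card_nsmul_eq_zero']
  rw [← Submodule.span_int_eq_addSubgroupClosure, Submodule.mem_toAddSubgroup] at hgen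
  obtain ⟨T, hT, hgT⟩ := Submodule.mem_span_finite_of_mem_span hgen
  obtain ⟨E, hET, hE, hspan⟩ := exists_subset_card_le_span_image_eq hr hp hf T
  refine ⟨E, (Finset.coe_subset.mpr hET).trans hT, by rwa [Set.ncard_coe_finset], ?_⟩
  rw [← Submodule.span_int_eq_addSubgroupClosure, Submodule.mem_toAddSubgroup]
  have hfg : f g ∈ span ℤ (f '' E) := hspan ▸ Submodule.apply_mem_span_image_of_mem_span f hgT
  have hfE : span ℤ (f '' E) ≤ span ℤ E := Submodule.span_le.mpr <| by
    rintro _ ⟨x, hx, rfl⟩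
    exact nsmul_mem (Submodule.subset_span hx) m
  obtain ⟨l, hl⟩ := exists_nsmul_eq_self_of_coprime hcop
  exact hl ▸ nsmul_mem (hfE hfg) l

theorem mem_closure_small_subset_of_primePow_order
    (G : Type*) [AddCommGroup G] [Fintype G] (r : ℕ)
    (hr : IsRank G r) (G₀ : Set G) (g : G)
    (hg : g ∈ G₀) (hg0 : g ≠ 0)
    (hgen : g ∈ AddSubgroup.closure (G₀ \ {g}))
    (hpp : IsPrimePow (addOrderOf g)) :
    ∃ E : Set G, E ⊆ G₀ \ {g} ∧ E.ncard ≤ r ∧ g ∈ AddSubgroup.closure E :=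
  mem_closure_small_subset_of_primePow_order_general G r hr G₀ g hgen hpp
end
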